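/- arXiv:1606.02121 — 5 statements merged into one kernel-verified Lean document; each statement's English description precedes it below -/
import Mathlib

section
/- Let T be an integral domain and A = T⟨y^{±1}, z⟩ the algebra with relations z y = ε y z where ε is a primitive d-th root of unity and ε - 1 ∈ T^×. Then the localization of the first quantized Weyl algebra A₁^ε(T) at the powers of y is isomorphic as a T-algebra to A, via y ↦ y, z = 1 + (ε-1)yx ↦ z, with inverse determined by x = (ε-1)^{-1} y^{-1}(z - 1). -/
open FreeAlgebra

/-- Relations of the localization `A₁^ε(T)[y⁻¹]` of the first quantized Weyl algebra
at the powers of the normal element `y`: generators `x = 0`, `y = 1`, `y⁻¹ = 2` with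
`x y = ε y x + 1`, `y y⁻¹ = 1 = y⁻¹ y`. -/
inductive WeylLocRel (T : Type*) [CommRing T] (ε : T) :
    FreeAlgebra T (Fin 3) → FreeAlgebra T (Fin 3) → Prop
  | weyl : WeylLocRel T ε (ι T 0 * ι T 1) (ε • (ι T 1 * ι T 0) + 1)
  | inv₁ : WeylLocRel T ε (ι T 1 * ι T 2) 1
  | inv₂ : WeylLocRel T ε (ι T 2 * ι T 1) 1

/-- Relations of the mixed skew-polynomial/quantum torus algebra `T⟨y^{±1}, z⟩` with
`z y = ε y z`: generators `y = 0`, `y⁻¹ = 1`, `z = 2`. -/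
inductive TorusRel (T : Type*) [CommRing T] (ε : T) :
    FreeAlgebra T (Fin 3) → FreeAlgebra T (Fin 3) → Prop
  | inv₁ : TorusRel T ε (ι T 0 * ι T 1) 1
  | inv₂ : TorusRel T ε (ι T 1 * ι T 0) 1
  | skew : TorusRel T ε (ι T 2 * ι T 0) (ε • (ι T 0 * ι T 2))

section Aux
variable {T : Type*} [CommRing T] (ε c : T) (hc : (ε - 1) * c = 1)

local notation "mkA" => RingQuot.mkAlgHom T (WeylLocRel T ε)
local notation "mkB" => RingQuot.mkAlgHom T (TorusRel T ε)

noncomputable def Fhom : FreeAlgebra T (Fin 3) →ₐ[T] RingQuot (TorusRel T ε) :=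
  FreeAlgebra.lift T ![c • (mkB (ι T 1) * (mkB (ι T 2) - 1)), mkB (ι T 0), mkB (ι T 1)]

noncomputable def Ghom : FreeAlgebra T (Fin 3) →ₐ[T] RingQuot (WeylLocRel T ε) :=
  FreeAlgebra.lift T ![mkA (ι T 1), mkA (ι T 2),
    1 + (ε - 1) • (mkA (ι T 1) * mkA (ι T 0))]

lemma Fhom_rel (hc : (ε - 1) * c = 1) (a b : FreeAlgebra T (Fin 3)) (h : WeylLocRel T ε a b) :
    Fhom ε c a = Fhom ε c b := by
  have hB1 : mkB (ι T 0) * mkB (ι T 1) = 1 := by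
    simpa using RingQuot.mkAlgHom_rel T (TorusRel.inv₁ (T := T) (ε := ε))
  have hB2 : mkB (ι T 1) * mkB (ι T 0) = 1 := by
    simpa using RingQuot.mkAlgHom_rel T (TorusRel.inv₂ (T := T) (ε := ε))
  have hB3 : mkB (ι T 2) * mkB (ι T 0) = ε • (mkB (ι T 0) * mkB (ι T 2)) := by
    simpa using RingQuot.mkAlgHom_rel T (TorusRel.skew (T := T) (ε := ε))
  cases h with
  | weyl =>
      simp only [Fhom, map_mul, map_add, map_smul, map_one, lift_ι_apply,
        Matrix.cons_val_zero, Matrix.cons_val_one, Matrix.head_cons]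
      rw [smul_mul_assoc, mul_assoc, sub_mul, one_mul, hB3, mul_sub, mul_smul_comm,
        ← mul_assoc, hB2, one_mul, mul_smul_comm, smul_smul, ← mul_assoc, hB1, one_mul,
        smul_sub, smul_smul, smul_sub]
      match_scalars <;> first | ring1 | linear_combination hc | linear_combination -hc
  | inv₁ =>
      simp [Fhom, hB1]
  | inv₂ =>
      simp [Fhom, hB2]

lemma Ghom_rel (a b : FreeAlgebra T (Fin 3)) (h : TorusRel T ε a b) :
    Ghom ε a = Ghom ε b := by
  have hA1 : mkA (ι T 0) * mkA (ι T 1) = ε • (mkA (ι T 1) * mkA (ι T 0)) + 1 := by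
    simpa using RingQuot.mkAlgHom_rel T (WeylLocRel.weyl (T := T) (ε := ε))
  have hA2 : mkA (ι T 1) * mkA (ι T 2) = 1 := by
    simpa using RingQuot.mkAlgHom_rel T (WeylLocRel.inv₁ (T := T) (ε := ε))
  have hA3 : mkA (ι T 2) * mkA (ι T 1) = 1 := by
    simpa using RingQuot.mkAlgHom_rel T (WeylLocRel.inv₂ (T := T) (ε := ε))
  cases h with
  | inv₁ => simp [Ghom, hA2]
  | inv₂ => simp [Ghom, hA3]
  | skew =>
      simp only [Ghom, map_mul, map_add, map_smul, map_one, lift_ι_apply,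
        Matrix.cons_val_zero, Matrix.cons_val_one, Matrix.head_cons,
        Matrix.cons_val_two, Matrix.tail_cons]
      set Y := mkA (ι T 1)
      set X := mkA (ι T 0)
      simp only [add_mul, one_mul, smul_mul_assoc, mul_assoc]
      rw [hA1]
      simp only [mul_add, mul_one, mul_smul_comm, smul_add, smul_smul]
      match_scalars <;> ring

noncomputable def fAB (hc : (ε - 1) * c = 1) :
    RingQuot (WeylLocRel T ε) →ₐ[T] RingQuot (TorusRel T ε) :=
  RingQuot.liftAlgHom T ⟨Fhom ε c, Fhom_rel ε c hc⟩

noncomputable def gBA : RingQuot (TorusRel T ε) →ₐ[T] RingQuot (WeylLocRel T ε) :=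
  RingQuot.liftAlgHom T ⟨Ghom ε, Ghom_rel ε⟩

lemma fAB_apply (hc : (ε - 1) * c = 1) (w : FreeAlgebra T (Fin 3)) :
    fAB ε c hc (mkA w) = Fhom ε c w :=
  RingQuot.liftAlgHom_mkAlgHom_apply _ _ _ _

lemma gBA_apply (w : FreeAlgebra T (Fin 3)) :
    gBA ε (mkB w) = Ghom ε w :=
  RingQuot.liftAlgHom_mkAlgHom_apply _ _ _ _

lemma gf (hc : (ε - 1) * c = 1) :
    (gBA ε).comp (fAB ε c hc) = AlgHom.id T _ := by
  have hA3 : mkA (ι T 2) * mkA (ι T 1) = 1 := by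
    simpa using RingQuot.mkAlgHom_rel T (WeylLocRel.inv₂ (T := T) (ε := ε))
  refine RingQuot.ringQuot_ext' _ _ _ ?_
  refine FreeAlgebra.hom_ext (funext fun i => ?_)
  fin_cases i
  · simp only [Fin.zero_eta, Function.comp_apply, AlgHom.coe_comp, AlgHom.coe_id, id_eq,
      AlgHom.comp_apply, fAB_apply, gBA_apply, Fhom, Ghom, lift_ι_apply,
      Matrix.cons_val_zero, Matrix.cons_val_one, Matrix.head_cons, Matrix.cons_val_two,
      Matrix.tail_cons, map_smul, map_mul, map_sub, map_one, gBA_apply]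
    rw [add_sub_cancel_left, mul_smul_comm, smul_smul, ← mul_assoc, hA3, one_mul,
      mul_comm c, hc, one_smul]
  · simp [fAB_apply, gBA_apply, Fhom, Ghom]
  · simp [fAB_apply, gBA_apply, Fhom, Ghom]

lemma fg (hc : (ε - 1) * c = 1) :
    (fAB ε c hc).comp (gBA ε) = AlgHom.id T _ := by
  have hB1 : mkB (ι T 0) * mkB (ι T 1) = 1 := by
    simpa using RingQuot.mkAlgHom_rel T (TorusRel.inv₁ (T := T) (ε := ε))
  refine RingQuot.ringQuot_ext' _ _ _ ?_
  refine FreeAlgebra.hom_ext (funext fun i => ?_)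
  fin_cases i
  · simp [fAB_apply, gBA_apply, Fhom, Ghom]
  · simp [fAB_apply, gBA_apply, Fhom, Ghom]
  · simp only [Fin.reduceFinMk, Fin.zero_eta, Fin.mk_one, Function.comp_apply, AlgHom.coe_comp,
      AlgHom.coe_id, id_eq, AlgHom.comp_apply, fAB_apply, gBA_apply, Fhom, Ghom,
      lift_ι_apply, Matrix.cons_val_zero, Matrix.cons_val_one, Matrix.head_cons,
      Matrix.cons_val_two, Matrix.tail_cons, map_smul, map_mul, map_add, map_one,
      fAB_apply]
    rw [mul_smul_comm, smul_smul, ← mul_assoc, hB1, one_mul, hc, one_smul,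
      add_sub_cancel]

end Aux


/-- The localization of the first quantized Weyl algebra `A₁^ε(T)` at the powers of `y`
is isomorphic, as a `T`-algebra, to the mixed algebra `T⟨y^{±1}, z⟩` with `z y = ε y z`,
via `y ↦ y` (and `y⁻¹ ↦ y⁻¹`), `z = 1 + (ε-1) y x ↦ z`, with inverse determined by
`x = (ε-1)⁻¹ y⁻¹ (z - 1)`. -/
theorem stmt_7 {T : Type*} [CommRing T] [IsDomain T]
    (d : ℕ) (hd : 2 ≤ d) (ε : T) (hε : IsPrimitiveRoot ε d) (hu : IsUnit (ε - 1)) :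
    ∃ φ : RingQuot (WeylLocRel T ε) ≃ₐ[T] RingQuot (TorusRel T ε),
      φ (RingQuot.mkAlgHom T (WeylLocRel T ε) (ι T 1))
          = RingQuot.mkAlgHom T (TorusRel T ε) (ι T 0) ∧
      φ (RingQuot.mkAlgHom T (WeylLocRel T ε) (ι T 2))
          = RingQuot.mkAlgHom T (TorusRel T ε) (ι T 1) ∧
      φ (1 + (ε - 1) • (RingQuot.mkAlgHom T (WeylLocRel T ε) (ι T 1) *
            RingQuot.mkAlgHom T (WeylLocRel T ε) (ι T 0)))
          = RingQuot.mkAlgHom T (TorusRel T ε) (ι T 2) ∧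
      φ (RingQuot.mkAlgHom T (WeylLocRel T ε) (ι T 0))
          = (↑hu.unit⁻¹ : T) • (RingQuot.mkAlgHom T (TorusRel T ε) (ι T 1) *
              (RingQuot.mkAlgHom T (TorusRel T ε) (ι T 2) - 1)) := by
  have hc : (ε - 1) * (↑hu.unit⁻¹ : T) = 1 := by
    exact hu.mul_val_inv
  set c : T := (↑hu.unit⁻¹ : T)
  have hB1 : RingQuot.mkAlgHom T (TorusRel T ε) (ι T 0) *
      RingQuot.mkAlgHom T (TorusRel T ε) (ι T 1) = 1 := by
    simpa using RingQuot.mkAlgHom_rel T (TorusRel.inv₁ (T := T) (ε := ε))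
  refine ⟨AlgEquiv.ofAlgHom (fAB ε c hc) (gBA ε) (fg ε c hc) (gf ε c hc), ?_, ?_, ?_, ?_⟩ <;>
    simp only [AlgEquiv.ofAlgHom_apply] <;>
    simp only [map_add, map_one, map_smul, map_mul, fAB_apply, Fhom, lift_ι_apply,
      Matrix.cons_val_zero, Matrix.cons_val_one, Matrix.head_cons, Matrix.cons_val_two,
      Matrix.tail_cons]
  rw [mul_smul_comm, smul_smul, ← mul_assoc, hB1, one_mul, hc, one_smul,
    add_sub_cancel]
end

section
/- Let q be an indeterminate over an integral domain T and ε ∈ T^× a primitive d-th root of unity. In the T[q^{±1}]-algebra generated by x, y with relation x y = q y x + 1 (a domain), one has x^d y^d - q^{d²} y^d x^d = ∑_{i=0}^{d-1} t_i y^i x^i for suitable t_i ∈ T[q^{±1}], where t_0 = ∏_{k=1}^{d} (1 + q + ⋯ + q^{k-1}) = ∏_{k=1}^d [k]_q. -/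
open FreeAlgebra LaurentPolynomial

/-- The defining relation of the quantized Weyl algebra over `T[q^{±1}]`:
`x y = q y x + 1`, with generators `x = 0`, `y = 1`. -/
inductive QWeylRel (T : Type*) [CommRing T] :
    FreeAlgebra (LaurentPolynomial T) (Fin 2) → FreeAlgebra (LaurentPolynomial T) (Fin 2) → Prop
  | rel : QWeylRel T (ι (LaurentPolynomial T) 0 * ι (LaurentPolynomial T) 1)
      ((LaurentPolynomial.T 1 : LaurentPolynomial T) •
        (ι (LaurentPolynomial T) 1 * ι (LaurentPolynomial T) 0) + 1)

/-!
Moving the `x`'s of `xᵐ yⁿ` to the right one at a time with `x yᵃ = qᵃ yᵃ x + [a]_q yᵃ⁻¹`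
writes it as `∑ₖ c_{m,k} yⁿ⁻ᵏ xᵐ⁻ᵏ`, where `k` counts the uses of the constant term of the
relation. The coefficient of `yⁿ xᵐ` (no contraction) is `q^{nm}`, and that of `yⁿ⁻ᵐ`
(every `x` contracted) is `[n]_q [n-1]_q ⋯ [n-m+1]_q`. For `m = n = d` this gives the
theorem with `tᵢ = c_{d,d-i}`.
-/

open Finset

namespace QWeyl

variable {R : Type*} [CommSemiring R]

/-- The coefficient `c_{m,k}` of `y^(n-k) * x^(m-k)` in `x^m * y^n`; the recursion is
left multiplication by `x`, see `mul_pow_mul_pow_eq_of_mul_eq`. -/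
def normalCoeff (q : R) (n : ℕ) : ℕ → ℕ → R
  | 0, 0 => 1
  | 0, _ + 1 => 0
  | m + 1, 0 => q ^ n * normalCoeff q n m 0
  | m + 1, k + 1 => q ^ (n - (k + 1)) * normalCoeff q n m (k + 1)
      + (∑ j ∈ range (n - k), q ^ j) * normalCoeff q n m k

theorem normalCoeff_eq_zero_of_lt (q : R) (n : ℕ) {m k : ℕ} (h : m < k) :
    normalCoeff q n m k = 0 := by
  induction m generalizing k with
  | zero => obtain ⟨k, rfl⟩ := Nat.exists_eq_add_one.mpr h; rfl
  | succ m ih =>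
    obtain ⟨k, rfl⟩ := Nat.exists_eq_add_one.mpr (Nat.zero_lt_of_lt h)
    rw [normalCoeff, ih (by omega), ih (by omega), mul_zero, mul_zero, add_zero]

theorem normalCoeff_zero_right (q : R) (n m : ℕ) : normalCoeff q n m 0 = q ^ (n * m) := by
  induction m with
  | zero => rw [mul_zero, pow_zero]; rfl
  | succ m ih => rw [normalCoeff, ih, ← pow_add, Nat.mul_succ, add_comm]

theorem normalCoeff_self (q : R) (n m : ℕ) :
    normalCoeff q n m m = ∏ j ∈ range m, ∑ i ∈ range (n - j), q ^ i := by
  induction m with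
  | zero => rfl
  | succ m ih =>
    rw [normalCoeff, normalCoeff_eq_zero_of_lt q n (Nat.lt_succ_self m), ih, prod_range_succ,
      mul_zero, zero_add, mul_comm]

theorem normalCoeff_self_eq_prod_geom_sum (q : R) (d : ℕ) :
    normalCoeff q d d d = ∏ k ∈ range d, ∑ j ∈ range (k + 1), q ^ j := by
  rw [normalCoeff_self, ← prod_range_reflect]
  refine prod_congr rfl fun j hj => ?_
  rw [Nat.sub_sub, Nat.sub_sub_self (by simpa [add_comm] using mem_range.mp hj), add_comm]

section Semiring

variable {A : Type*} [Semiring A] [Algebra R A] {q : R} {x y : A}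

theorem mul_pow_succ_eq_of_mul_eq (hxy : x * y = q • (y * x) + 1) (n : ℕ) :
    x * y ^ (n + 1) = q ^ (n + 1) • (y ^ (n + 1) * x) + (∑ j ∈ range (n + 1), q ^ j) • y ^ n := by
  induction n with
  | zero => simpa using hxy
  | succ n ih =>
    calc x * y ^ (n + 2) = (x * y ^ (n + 1)) * y := by rw [pow_succ _ (n + 1), mul_assoc]
      _ = q ^ (n + 1) • (y ^ (n + 1) * (x * y)) + (∑ j ∈ range (n + 1), q ^ j) • y ^ (n + 1) := by
        rw [ih, add_mul, smul_mul_assoc, smul_mul_assoc, mul_assoc, pow_succ y n]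
      _ = _ := by
        rw [hxy, mul_add, mul_smul_comm, smul_add, smul_smul, ← pow_succ, ← mul_assoc, ← pow_succ,
          mul_one, geom_sum_succ' (n := n + 1), add_smul, add_assoc]

theorem mul_pow_eq_of_mul_eq (hxy : x * y = q • (y * x) + 1) (n : ℕ) :
    x * y ^ n = q ^ n • (y ^ n * x) + (∑ j ∈ range n, q ^ j) • y ^ (n - 1) := by
  rcases n with _ | n
  · simp
  · exact mul_pow_succ_eq_of_mul_eq hxy n

theorem mul_pow_mul_pow_eq_of_mul_eq (hxy : x * y = q • (y * x) + 1) (a b : ℕ) :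
    x * (y ^ a * x ^ b) =
      q ^ a • (y ^ a * x ^ (b + 1)) + (∑ j ∈ range a, q ^ j) • (y ^ (a - 1) * x ^ b) := by
  rw [← mul_assoc, mul_pow_eq_of_mul_eq hxy, add_mul, smul_mul_assoc, smul_mul_assoc, mul_assoc,
    ← pow_succ']

theorem pow_mul_pow_eq_sum_of_mul_eq (hxy : x * y = q • (y * x) + 1) (m n : ℕ) :
    x ^ m * y ^ n = ∑ k ∈ range (m + 1), normalCoeff q n m k • (y ^ (n - k) * x ^ (m - k)) := by
  induction m with
  | zero => simp [normalCoeff]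
  | succ m ih =>
    have hstep : ∀ k ∈ range (m + 1), x * (normalCoeff q n m k • (y ^ (n - k) * x ^ (m - k))) =
        (q ^ (n - k) * normalCoeff q n m k) • (y ^ (n - k) * x ^ (m + 1 - k)) +
          ((∑ j ∈ range (n - k), q ^ j) * normalCoeff q n m k) •
            (y ^ (n - (k + 1)) * x ^ (m + 1 - (k + 1))) := by
      intro k hk
      rw [mul_smul_comm, mul_pow_mul_pow_eq_of_mul_eq hxy, smul_add, smul_smul, smul_smul,
        Nat.sub_add_comm (Nat.lt_succ_iff.mp (mem_range.mp hk)), Nat.sub_sub, Nat.add_sub_add_right,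
        mul_comm, mul_comm (normalCoeff _ _ _ _)]
    calc x ^ (m + 1) * y ^ n
        = ∑ k ∈ range (m + 1), x * (normalCoeff q n m k • (y ^ (n - k) * x ^ (m - k))) := by
          rw [pow_succ', mul_assoc, ih, mul_sum]
      _ = ∑ k ∈ range (m + 2), (q ^ (n - k) * normalCoeff q n m k) • (y ^ (n - k) * x ^ (m + 1 - k))
          + ∑ k ∈ range (m + 1), ((∑ j ∈ range (n - k), q ^ j) * normalCoeff q n m k) •
            (y ^ (n - (k + 1)) * x ^ (m + 1 - (k + 1))) := by
          rw [sum_congr rfl hstep, sum_add_distrib, sum_range_succ _ (m + 1),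
            normalCoeff_eq_zero_of_lt q n (Nat.lt_succ_self m), mul_zero, zero_smul, add_zero]
      _ = _ := by
          rw [sum_range_succ' _ (m + 1), sum_range_succ' _ (m + 1)]
          simp only [normalCoeff, add_smul, sum_add_distrib, Nat.sub_zero]
          abel

end Semiring

theorem pow_mul_pow_sub_eq_sum_of_mul_eq {A : Type*} [Ring A] [Algebra R A] {q : R} {x y : A}
    (hxy : x * y = q • (y * x) + 1) (d : ℕ) :
    x ^ d * y ^ d - q ^ (d ^ 2) • (y ^ d * x ^ d) =
      ∑ i ∈ range d, normalCoeff q d d (d - i) • (y ^ i * x ^ i) := by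
  rw [pow_mul_pow_eq_sum_of_mul_eq hxy, sum_range_succ', normalCoeff_zero_right, Nat.sub_zero,
    ← sq, add_sub_cancel_right, ← sum_range_reflect]
  refine sum_congr rfl fun k hk => ?_
  have hk' : d - 1 - k + 1 = d - k := by have := mem_range.mp hk; omega
  rw [hk', Nat.sub_sub_self (mem_range.mp hk).le]

end QWeyl

theorem stmt_8_general {T : Type*} [CommRing T] (d : ℕ) :
    ∃ t : ℕ → LaurentPolynomial T,
      (RingQuot.mkAlgHom (LaurentPolynomial T) (QWeylRel T) (ι (LaurentPolynomial T) 0)) ^ d *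
        (RingQuot.mkAlgHom (LaurentPolynomial T) (QWeylRel T) (ι (LaurentPolynomial T) 1)) ^ d -
      ((LaurentPolynomial.T 1 : LaurentPolynomial T) ^ (d ^ 2)) •
        ((RingQuot.mkAlgHom (LaurentPolynomial T) (QWeylRel T) (ι (LaurentPolynomial T) 1)) ^ d *
         (RingQuot.mkAlgHom (LaurentPolynomial T) (QWeylRel T) (ι (LaurentPolynomial T) 0)) ^ d)
      = ∑ i ∈ Finset.range d, t i •
          ((RingQuot.mkAlgHom (LaurentPolynomial T) (QWeylRel T) (ι (LaurentPolynomial T) 1)) ^ i *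
           (RingQuot.mkAlgHom (LaurentPolynomial T) (QWeylRel T) (ι (LaurentPolynomial T) 0)) ^ i)
      ∧ t 0 = ∏ k ∈ Finset.range d,
          ∑ j ∈ Finset.range (k + 1), (LaurentPolynomial.T 1 : LaurentPolynomial T) ^ j := by
  have hxy := RingQuot.mkAlgHom_rel (LaurentPolynomial T) (QWeylRel.rel (T := T))
  rw [map_add, map_smul, map_mul, map_mul, map_one] at hxy
  exact ⟨fun i => QWeyl.normalCoeff (LaurentPolynomial.T 1) d d (d - i),
    QWeyl.pow_mul_pow_sub_eq_sum_of_mul_eq (A := RingQuot (QWeylRel T)) hxy d,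
    QWeyl.normalCoeff_self_eq_prod_geom_sum _ d⟩

/-- In the `T[q^{±1}]`-algebra generated by `x, y` with `x y = q y x + 1`, one has
`x^d y^d - q^{d²} y^d x^d = ∑_{i=0}^{d-1} tᵢ yⁱ xⁱ` for suitable `tᵢ ∈ T[q^{±1}]`,
with `t₀ = ∏_{k=1}^d [k]_q` where `[k]_q = 1 + q + ⋯ + q^{k-1}`. -/
theorem stmt_8 {T : Type*} [CommRing T] [IsDomain T] (d : ℕ) (hd : 0 < d)
    (ε : T) (hε : IsPrimitiveRoot ε d) (hεu : IsUnit ε) :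
    ∃ t : ℕ → LaurentPolynomial T,
      (RingQuot.mkAlgHom (LaurentPolynomial T) (QWeylRel T) (ι (LaurentPolynomial T) 0)) ^ d *
        (RingQuot.mkAlgHom (LaurentPolynomial T) (QWeylRel T) (ι (LaurentPolynomial T) 1)) ^ d -
      ((LaurentPolynomial.T 1 : LaurentPolynomial T) ^ (d ^ 2)) •
        ((RingQuot.mkAlgHom (LaurentPolynomial T) (QWeylRel T) (ι (LaurentPolynomial T) 1)) ^ d *
         (RingQuot.mkAlgHom (LaurentPolynomial T) (QWeylRel T) (ι (LaurentPolynomial T) 0)) ^ d)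
      = ∑ i ∈ Finset.range d, t i •
          ((RingQuot.mkAlgHom (LaurentPolynomial T) (QWeylRel T) (ι (LaurentPolynomial T) 1)) ^ i *
           (RingQuot.mkAlgHom (LaurentPolynomial T) (QWeylRel T) (ι (LaurentPolynomial T) 0)) ^ i)
      ∧ t 0 = ∏ k ∈ Finset.range d,
          ∑ j ∈ Finset.range (k + 1), (LaurentPolynomial.T 1 : LaurentPolynomial T) ^ j :=
  stmt_8_general d
end

section
/- In the setting of a specialization A_ε = A/(q-ε)A of a torsion-free T[q^{±1}]-algebra A, for any central element z ∈ Z(A_ε) and lift c ∈ σ^{-1}(z), the formula ∂_c(σ(a)) := σ([c,a]/(q-ε)) gives a well-defined T-linear derivation of A_ε, and for two lifts c, c' of z the difference ∂_c - ∂_{c'} is the inner derivation ad σ((c-c')/(q-ε)). -/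
/-- The central element `q - ε` of `T[q^{±1}]`. -/
noncomputable def qMinus {T : Type*} [CommRing T] (ε : T) : LaurentPolynomial T :=
  LaurentPolynomial.T 1 - LaurentPolynomial.C ε

/-- For a specialization `A_ε = A/(q-ε)A` of a torsion-free `T[q^{±1}]`-algebra `A`
with projection `σ`, any central `z ∈ Z(A_ε)` and lift `c ∈ σ⁻¹(z)` give a
well-defined `T`-linear derivation `∂_c` of `A_ε` via `∂_c(σ a) = σ([c,a]/(q-ε))`,
and for two lifts `c, c'` of `z` the difference `∂_c - ∂_{c'}` is the inner
derivation `ad σ((c-c')/(q-ε))`. -/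
theorem stmt_11 {T A Aε : Type*} [CommRing T] [IsDomain T] [Ring A]
    [Algebra (LaurentPolynomial T) A] [Algebra T A]
    [IsScalarTower T (LaurentPolynomial T) A]
    [Ring Aε] [Algebra T Aε]
    (htf : ∀ (r : LaurentPolynomial T) (a : A), r • a = 0 → r = 0 ∨ a = 0)
    (ε : T) (hε : IsUnit ε)
    (σ : A →ₐ[T] Aε) (hσ : Function.Surjective σ)
    (hker : ∀ a : A, σ a = 0 ↔
      ∃ b : A, a = algebraMap (LaurentPolynomial T) A (qMinus ε) * b)
    (c : A) (hc : σ c ∈ Subring.center Aε) :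
    -- each commutator [c,a] is divisible by q - ε
    (∀ a : A, ∃ b : A,
        c * a - a * c = algebraMap (LaurentPolynomial T) A (qMinus ε) * b) ∧
    -- ∂_c is a well-defined T-linear derivation of A_ε
    (∃ D : Aε →ₗ[T] Aε,
      (∀ x y : Aε, D (x * y) = D x * y + x * D y) ∧
      (∀ a b : A, c * a - a * c = algebraMap (LaurentPolynomial T) A (qMinus ε) * b →
        D (σ a) = σ b) ∧
      -- difference of the derivations from two lifts is an inner derivation
      (∀ c' : A, σ c' = σ c →
        ∀ D' : Aε →ₗ[T] Aε,
          (∀ a b : A, c' * a - a * c' = algebraMap (LaurentPolynomial T) A (qMinus ε) * b →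
            D' (σ a) = σ b) →
          ∀ e : A, c - c' = algebraMap (LaurentPolynomial T) A (qMinus ε) * e →
            ∀ x : Aε, D x - D' x = σ e * x - x * σ e)) := by
  classical
  set π : A := algebraMap (LaurentPolynomial T) A (qMinus ε) with hπdef
  -- q - ε is nonzero
  have hq0 : qMinus ε ≠ 0 := by
    have : qMinus ε = Polynomial.toLaurent (Polynomial.X - Polynomial.C ε) := by
      simp [qMinus, map_sub]
    rw [this]
    intro h
    have := Polynomial.toLaurent_injective (R := T) (by simpa using h : Polynomial.toLaurent (Polynomial.X - Polynomial.C ε) = Polynomial.toLaurent 0)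
    exact Polynomial.X_sub_C_ne_zero ε this
  -- cancellation by π
  have hcancel : ∀ x y : A, π * x = π * y → x = y := by
    intro x y h
    have h0 : qMinus ε • (x - y) = 0 := by
      rw [Algebra.smul_def, mul_sub, sub_eq_zero]; exact h
    rcases htf _ _ h0 with h' | h'
    · exact absurd h' hq0
    · exact sub_eq_zero.mp h'
  have hπc : ∀ x : A, π * x = x * π := fun x => Algebra.commutes _ x
  have hπswap : ∀ a b : A, π * (a * b) = a * (π * b) := fun a b => by
    rw [← mul_assoc, hπc a, mul_assoc]
  have hcz : ∀ y : Aε, y * σ c = σ c * y := Subring.mem_center_iff.mp hc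
  -- divisibility of commutators
  have hcomm : ∀ a : A, ∃ b : A, c * a - a * c = π * b := by
    intro a
    exact (hker _).mp (by simp [map_sub, map_mul, hcz (σ a)])
  choose d hd using hcomm
  -- d is exactly additive
  have hdadd : ∀ a a' : A, d (a + a') = d a + d a' := by
    intro a a'
    apply hcancel
    rw [mul_add, ← hd, ← hd, ← hd]; noncomm_ring
  have hdsmul : ∀ (t : T) (a : A), d (t • a) = t • d a := by
    intro t a
    apply hcancel
    rw [mul_smul_comm, ← hd, ← hd, mul_smul_comm, smul_mul_assoc, ← smul_sub]
  -- well-definedness mod ker σ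
  have hwd : ∀ a a' : A, σ a = σ a' → σ (d a) = σ (d a') := by
    intro a a' h
    obtain ⟨u, hu⟩ := (hker (a - a')).mp (by rw [map_sub, h, sub_self])
    have key : d a - d a' = c * u - u * c := by
      apply hcancel
      rw [mul_sub, ← hd, ← hd, mul_sub]
      calc c * a - a * c - (c * a' - a' * c)
          = c * (a - a') - (a - a') * c := by noncomm_ring
        _ = c * (π * u) - (π * u) * c := by rw [hu]
        _ = π * (c * u) - π * (u * c) := by rw [hπswap c u, mul_assoc]
    have : σ (d a) - σ (d a') = 0 := by
      rw [← map_sub, key, map_sub, map_mul, map_mul, hcz (σ u), sub_self]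
    exact sub_eq_zero.mp this
  choose lift hlift using hσ
  -- the derivation
  set D0 : Aε → Aε := fun x => σ (d (lift x)) with hD0
  have hD0eq : ∀ a : A, D0 (σ a) = σ (d a) := by
    intro a; exact hwd _ _ (hlift (σ a))
  have hDadd : ∀ x y : Aε, D0 (x + y) = D0 x + D0 y := by
    intro x y
    have : σ (lift (x + y)) = σ (lift x + lift y) := by
      rw [map_add, hlift, hlift, hlift]
    simp only [hD0, hwd _ _ this, hdadd, map_add]
  have hDsmul : ∀ (t : T) (x : Aε), D0 (t • x) = t • D0 x := by
    intro t x
    have : σ (lift (t • x)) = σ (t • lift x) := by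
      rw [map_smul, hlift, hlift]
    simp only [hD0, hwd _ _ this, hdsmul, map_smul]
  refine ⟨fun a => ⟨d a, hd a⟩,
    ⟨{ toFun := D0, map_add' := hDadd, map_smul' := fun t x => hDsmul t x }, ?_, ?_, ?_⟩⟩
  · -- Leibniz
    intro x y
    have hmul : d (lift x * lift y) = d (lift x) * lift y + lift x * d (lift y) := by
      apply hcancel
      rw [← hd]
      calc c * (lift x * lift y) - lift x * lift y * c
          = (c * lift x - lift x * c) * lift y + lift x * (c * lift y - lift y * c) := by
            noncomm_ring
        _ = (π * d (lift x)) * lift y + lift x * (π * d (lift y)) := by rw [hd, hd]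
        _ = π * (d (lift x) * lift y + lift x * d (lift y)) := by
            rw [mul_add, hπswap (lift x) (d (lift y)), mul_assoc]
    have hxy : σ (lift (x * y)) = σ (lift x * lift y) := by
      rw [map_mul, hlift, hlift, hlift]
    show σ (d (lift (x * y))) = σ (d (lift x)) * y + x * σ (d (lift y))
    rw [hwd _ _ hxy, hmul, map_add, map_mul, map_mul, hlift, hlift]
  · -- spec
    intro a b hb
    have : d a = b := hcancel _ _ (by rw [← hd, hb])
    show D0 (σ a) = σ b
    rw [hD0eq, this]
  · -- difference is inner
    intro c' hc' D' hD' e he x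
    set a := lift x with ha
    have key : c' * a - a * c' = π * (d a - (e * a - a * e)) := by
      have h1 : (c - c') * a - a * (c - c') = π * (e * a) - π * (a * e) := by
        rw [he]
        calc π * e * a - a * (π * e)
            = π * (e * a) - a * (π * e) := by rw [mul_assoc]
          _ = π * (e * a) - π * (a * e) := by rw [hπswap a e]
      calc c' * a - a * c'
          = (c * a - a * c) - ((c - c') * a - a * (c - c')) := by noncomm_ring
        _ = π * d a - (π * (e * a) - π * (a * e)) := by rw [hd a, h1]
        _ = π * (d a - (e * a - a * e)) := by rw [mul_sub, mul_sub]
    have hD'x : D' x = σ (d a - (e * a - a * e)) := by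
      rw [← hlift x]; exact hD' a _ key
    show D0 x - D' x = σ e * x - x * σ e
    rw [hD'x]
    have : D0 x = σ (d a) := rfl
    rw [this, map_sub, map_sub, map_mul, map_mul, hlift]
    abel
end

section
/- Let K be a field of characteristic 0 and consider the Laurent polynomial Poisson algebra A° = K[X₁^{±1}, …, X_n^{±1}, Z₁^{±1}, …, Z_n^{±1}] with Poisson bracket satisfying {Z_j, Z_k} = 0, {Z_j, X_k} = -δ_{k ≤ j} c_{jk} Z_j X_k with all c_{jk} nonzero integers for k ≤ j, and {X_j, X_k} ∈ K[X₁,…,X_n]. Then A° has no nonzero proper Poisson ideals (it is Poisson simple). -/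
/-!
Take a nonzero `f` in the Poisson ideal `I` with the fewest monomials, translated so that `1` is
one of them. For a monomial `u`, the derivation `x ↦ u⁻¹ {u, x}` preserves `I`. Where it acts
diagonally on the monomials of `f` it kills `1`, so it maps `f` to an element of `I` with fewer
monomials, that is to `0`: all monomials of `f` have weight `0`. For `u = Z_j` these operators are
diagonal everywhere, the weight of `X^a Z^b` being the `j`-th entry of `-L a`, with `L` the lower
triangular part of `c`; as `L` has nonzero diagonal and `K` has characteristic zero,
`f ∈ K[Z^{±1}]`. There `u = X_j` acts diagonally with weights `Lᵀ b`, so `f` is a nonzero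
constant.
-/

/-- The Laurent polynomial algebra `K[X₁^{±1},…,X_n^{±1},Z₁^{±1},…,Z_n^{±1}]`,
realized as the group algebra of `ℤ^n × ℤ^n` over `K`. -/
abbrev LaurentAlg (K : Type*) [CommRing K] (n : ℕ) :=
  AddMonoidAlgebra K ((Fin n → ℤ) × (Fin n → ℤ))

/-- The generator `X_j` of `LaurentAlg K n`. -/
noncomputable def Xgen {K : Type*} [CommRing K] {n : ℕ} (j : Fin n) : LaurentAlg K n :=
  AddMonoidAlgebra.single (Pi.single j 1, 0) 1

/-- The generator `Z_j` of `LaurentAlg K n`. -/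
noncomputable def Zgen {K : Type*} [CommRing K] {n : ℕ} (j : Fin n) : LaurentAlg K n :=
  AddMonoidAlgebra.single (0, Pi.single j 1) 1

open AddMonoidAlgebra Finset
open scoped Matrix

structure IsSkewBiderivation (K : Type*) {A : Type*} [CommRing K] [CommRing A] [Algebra K A]
    (br : A → A → A) : Prop where
  anti : ∀ x y, br x y = -br y x
  add_left : ∀ x y z, br (x + y) z = br x z + br y z
  smul_left : ∀ (a : K) x y, br (a • x) y = a • br x y
  leibniz_left : ∀ x y z, br (x * y) z = x * br y z + y * br x z

namespace IsSkewBiderivation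

variable {K A : Type*} [CommRing K] [CommRing A] [Algebra K A] {br : A → A → A}

def hamiltonian (hbr : IsSkewBiderivation K br) (u : A) : Derivation K A A :=
  Derivation.mk'
    { toFun := br u
      map_add' := fun x y => by rw [hbr.anti, hbr.add_left, neg_add, ← hbr.anti, ← hbr.anti]
      map_smul' := fun a x => by rw [hbr.anti, hbr.smul_left, ← smul_neg, ← hbr.anti]; rfl }
    fun x y => by
      change br u (x * y) = x * br u y + y * br u x
      rw [hbr.anti, hbr.leibniz_left, hbr.anti y, hbr.anti x]
      ring

end IsSkewBiderivation

namespace AddMonoidAlgebra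

lemma isUnit_single_zero {R G : Type*} [CommSemiring R] [AddMonoid G] {a : R} (ha : IsUnit a) :
    IsUnit (single (0 : G) a) :=
  ha.map (algebraMap R R[G])

section Group

variable {R G : Type*} [AddCommGroup G]

def monomialEigenSubgroup [CommRing R] (D : Derivation R R[G] R[G]) (χ : G →+ R) :
    AddSubgroup G where
  carrier := {g | D (single g 1) = χ g • single g 1}
  zero_mem' := by simp [← one_def]
  add_mem' {g h} hg hh := by
    simp only [Set.mem_ofPred_eq] at *
    rw [← one_mul (1 : R), ← single_mul_single, D.leibniz, hg, hh, map_add, add_smul,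
      smul_eq_mul, smul_eq_mul, mul_smul_comm, mul_smul_comm, add_comm, mul_comm (single h 1)]
  neg_mem' {g} hg := by
    simp only [Set.mem_ofPred_eq] at *
    have hinv : single (-g) (1 : R) * single g 1 = 1 := by
      rw [single_mul_single, neg_add_cancel, mul_one, one_def]
    rw [D.leibniz_of_mul_eq_one hinv, hg, map_neg, smul_comm, smul_eq_mul, neg_mul, sq, mul_assoc,
      hinv, mul_one, smul_neg, neg_smul]

lemma mem_monomialEigenSubgroup_iff [CommRing R] {D : Derivation R R[G] R[G]} {χ : G →+ R}
    {g : G} : g ∈ monomialEigenSubgroup D χ ↔ D (single g 1) = χ g • single g 1 :=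
  Iff.rfl

lemma coeff_apply_of_diagonal_on_support [CommSemiring R] {T : R[G] →ₗ[R] R[G]} {e : G → R}
    {f : R[G]} (hT : ∀ p ∈ f.coeff.support, T (single p 1) = e p • single p 1) (q : G) :
    (T f).coeff q = e q * f.coeff q := by
  classical
  have hTf : T f = ∑ p ∈ f.coeff.support, single p (e p * f.coeff p) := by
    conv_lhs => rw [← sum_coeff_single f]
    rw [Finsupp.sum, map_sum]
    refine Finset.sum_congr rfl fun p hp => ?_
    rw [← mul_one (f.coeff p), ← smul_single', map_smul, hT p hp, smul_single', smul_single',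
      mul_one, mul_one, mul_comm]
  rw [hTf, coeff_sum, Finsupp.finsetSum_apply, Finset.sum_eq_single q]
  · simp
  · intro p _ hpq
    simp [hpq]
  · intro hq
    simp [Finsupp.notMem_support_iff.mp hq]

lemma eq_of_mem_support_of_minimal [CommRing R] [NoZeroDivisors R] (S : Submodule R R[G])
    {T : R[G] →ₗ[R] R[G]} (hTS : ∀ x ∈ S, T x ∈ S) {e : G → R} {f : R[G]}
    (hfS : f ∈ S) (hmin : ∀ g ∈ S, g ≠ 0 → #f.coeff.support ≤ #g.coeff.support)
    (hT : ∀ p ∈ f.coeff.support, T (single p 1) = e p • single p 1)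
    {p q : G} (hp : p ∈ f.coeff.support) (hq : q ∈ f.coeff.support) : e p = e q := by
  set g := T f - e q • f
  have hg : ∀ r, g.coeff r = (e r - e q) * f.coeff r := fun r => by
    simp [g, coeff_apply_of_diagonal_on_support hT, sub_mul]
  have hsupp : g.coeff.support ⊂ f.coeff.support := by
    refine Finset.ssubset_iff_of_subset (fun r hr => ?_) |>.mpr ⟨q, hq, ?_⟩
    · rw [Finsupp.mem_support_iff, hg] at hr
      exact Finsupp.mem_support_iff.mpr (right_ne_zero_of_mul hr)
    · simp [Finsupp.mem_support_iff, hg]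
  have hg0 : g = 0 := by
    by_contra hne
    exact (card_lt_card hsupp).not_ge (hmin g (sub_mem (hTS f hfS) (S.smul_mem _ hfS)) hne)
  have hgp := hg p
  rw [hg0, coeff_zero, Finsupp.zero_apply, eq_comm, mul_eq_zero] at hgp
  exact sub_eq_zero.mp (hgp.resolve_right (Finsupp.mem_support_iff.mp hp))

lemma exists_minimal_support_zero_mem [Semiring R] {I : Ideal R[G]} (hI : I ≠ ⊥) :
    ∃ f ∈ I, (0 : G) ∈ f.coeff.support ∧
      ∀ g ∈ I, g ≠ 0 → #f.coeff.support ≤ #g.coeff.support := by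
  classical
  set s := {g : R[G] | g ∈ I ∧ g ≠ 0}
  have hs : s.Nonempty := (Submodule.ne_bot_iff I).mp hI
  set f₁ := Function.argminOn (fun g : R[G] => #g.coeff.support) s hs
  obtain ⟨hf₁I, hf₁⟩ : f₁ ∈ I ∧ f₁ ≠ 0 := Function.argminOn_mem _ s hs
  obtain ⟨p, hp⟩ := Finsupp.support_nonempty_iff.mpr (coeff_eq_zero.not.mpr hf₁)
  refine ⟨single (-p) 1 * f₁, I.mul_mem_left _ hf₁I, by simpa using hp, fun g hgI hg => ?_⟩
  calc #(single (-p) 1 * f₁).coeff.support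
      ≤ #(f₁.coeff.support.image (-p + ·)) := card_le_card (support_coeff_single_mul_subset ..)
    _ ≤ #f₁.coeff.support := card_image_le
    _ ≤ #g.coeff.support :=
      not_lt.mp <| Function.not_lt_argminOn (fun g : R[G] => #g.coeff.support) s
        (a := g) ⟨hgI, hg⟩

end Group

end AddMonoidAlgebra

namespace IsSkewBiderivation

variable {K G : Type*} [CommRing K] [AddCommGroup G] {br : K[G] → K[G] → K[G]}
  (hbr : IsSkewBiderivation K br)

/-- `X^{-g} {X^g, ·}`, the Hamiltonian derivation of `log X^g`. -/
noncomputable def logHamiltonian (g : G) : Derivation K K[G] K[G] :=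
  (single (-g) 1 : K[G]) • hbr.hamiltonian (single g 1)

lemma logHamiltonian_apply (g : G) (x : K[G]) :
    hbr.logHamiltonian g x = single (-g) 1 * br (single g 1) x :=
  rfl

lemma logHamiltonian_mem {I : Ideal K[G]} (hI : ∀ a ∈ I, ∀ x, br a x ∈ I) (g : G) {x : K[G]}
    (hx : x ∈ I) : hbr.logHamiltonian g x ∈ I := by
  rw [logHamiltonian_apply, hbr.anti]
  exact I.mul_mem_left _ (I.neg_mem (hI x hx _))

lemma mem_monomialEigenSubgroup_logHamiltonian {χ : G →+ K} {g h : G}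
    (hgh : br (single g 1) (single h 1) = χ h • (single g 1 * single h 1)) :
    h ∈ monomialEigenSubgroup (hbr.logHamiltonian g) χ := by
  rw [mem_monomialEigenSubgroup_iff, logHamiltonian_apply, hgh, mul_smul_comm, ← mul_assoc,
    single_mul_single, neg_add_cancel, mul_one, ← one_def, one_mul]

end IsSkewBiderivation

section IntegerLattice

variable {ι : Type*} [Fintype ι] [DecidableEq ι]

lemma AddSubgroup.mem_of_forall_single_one_mem {H : AddSubgroup (ι → ℤ)}
    (h : ∀ i, Pi.single i 1 ∈ H) (v : ι → ℤ) : v ∈ H := by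
  rw [← Finset.univ_sum_single v]
  refine sum_mem fun i _ => ?_
  simpa [← Pi.single_smul] using H.zsmul_mem (h i) (v i)

lemma AddSubgroup.mk_zero_mem_of_forall_single_one_mem
    {H : AddSubgroup ((ι → ℤ) × (ι → ℤ))}
    (h : ∀ i, ((0 : ι → ℤ), Pi.single i 1) ∈ H) (v : ι → ℤ) : (0, v) ∈ H :=
  mem_comap.mp <| mem_of_forall_single_one_mem (H := H.comap (AddMonoidHom.inr _ _)) h v

lemma AddSubgroup.mem_of_forall_single_one_mem_prod {H : AddSubgroup ((ι → ℤ) × (ι → ℤ))}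
    (h₁ : ∀ i, (Pi.single i 1, (0 : ι → ℤ)) ∈ H)
    (h₂ : ∀ i, ((0 : ι → ℤ), Pi.single i 1) ∈ H)
    (p : (ι → ℤ) × (ι → ℤ)) : p ∈ H := by
  rw [← Prod.fst_add_snd p]
  exact H.add_mem
    (mem_comap.mp <| mem_of_forall_single_one_mem (H := H.comap (AddMonoidHom.inl _ _)) h₁ p.1)
    (mk_zero_mem_of_forall_single_one_mem h₂ p.2)

end IntegerLattice

section Laurent

variable {n : ℕ}

def lowerTriangularPart (c : Fin n → Fin n → ℤ) : Matrix (Fin n) (Fin n) ℤ :=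
  Matrix.of fun j k => if k ≤ j then c j k else 0

lemma det_lowerTriangularPart_ne_zero {c : Fin n → Fin n → ℤ}
    (hc : ∀ j k : Fin n, k ≤ j → c j k ≠ 0) : (lowerTriangularPart c).det ≠ 0 := by
  rw [Matrix.det_of_isLowerTriangular (lowerTriangularPart c)
    fun j k hjk => if_neg (not_le.mpr hjk)]
  exact prod_ne_zero_iff.mpr fun j _ => by simpa [lowerTriangularPart] using hc j j le_rfl

/-- The weight of `X^a Z^b` under `Z_j⁻¹ {Z_j, ·}`. -/
def zWeight (K : Type*) [Field K] (c : Fin n → Fin n → ℤ) (j : Fin n) :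
    (Fin n → ℤ) × (Fin n → ℤ) →+ K :=
  AddMonoidHom.mk' (fun p => -((lowerTriangularPart c *ᵥ p.1) j : K)) fun p q => by
    simp [Matrix.mulVec_add]; ring

/-- The weight of `Z^b` under `X_j⁻¹ {X_j, ·}`. -/
def xWeight (K : Type*) [Field K] (c : Fin n → Fin n → ℤ) (j : Fin n) :
    (Fin n → ℤ) × (Fin n → ℤ) →+ K :=
  AddMonoidHom.mk' (fun p => ((p.2 ᵥ* lowerTriangularPart c) j : K)) fun p q => by
    simp [Matrix.add_vecMul]

variable {K : Type*} [Field K] {br : LaurentAlg K n → LaurentAlg K n → LaurentAlg K n}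
  (hbr : IsSkewBiderivation K br)
  {c : Fin n → Fin n → ℤ}

lemma logHamiltonian_Zgen_single
    (hZZ : ∀ j k : Fin n, br (Zgen j) (Zgen k) = 0)
    (hZX : ∀ j k : Fin n, br (Zgen j) (Xgen k) =
      if k ≤ j then -(c j k : LaurentAlg K n) * (Zgen j * Xgen k) else 0)
    (j : Fin n) (p : (Fin n → ℤ) × (Fin n → ℤ)) :
    hbr.logHamiltonian (0, Pi.single j 1) (single p 1) = zWeight K c j p • single p 1 := by
  rw [← mem_monomialEigenSubgroup_iff]
  refine AddSubgroup.mem_of_forall_single_one_mem_prod (fun k => ?_) (fun k => ?_) p <;>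
    refine hbr.mem_monomialEigenSubgroup_logHamiltonian ?_
  · have hjk := hZX j k
    simp only [Zgen, Xgen] at hjk
    rw [hjk]
    split_ifs with hkj <;>
      simp [zWeight, lowerTriangularPart, hkj, intCast_def, single_mul_single]
  · have hjk := hZZ j k
    simp only [Zgen] at hjk
    simp [hjk, zWeight]

lemma logHamiltonian_Xgen_single
    (hZX : ∀ j k : Fin n, br (Zgen j) (Xgen k) =
      if k ≤ j then -(c j k : LaurentAlg K n) * (Zgen j * Xgen k) else 0)
    (j : Fin n) {p : (Fin n → ℤ) × (Fin n → ℤ)} (hp : p.1 = 0) :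
    hbr.logHamiltonian (Pi.single j 1, 0) (single p 1) = xWeight K c j p • single p 1 := by
  obtain ⟨a, b⟩ := p
  obtain rfl : a = 0 := hp
  rw [← mem_monomialEigenSubgroup_iff]
  refine AddSubgroup.mk_zero_mem_of_forall_single_one_mem (fun k => ?_) b
  refine hbr.mem_monomialEigenSubgroup_logHamiltonian ?_
  have hkj := hZX k j
  simp only [Zgen, Xgen] at hkj
  rw [hbr.anti, hkj]
  split_ifs with hjk <;>
    simp [xWeight, lowerTriangularPart, hjk, intCast_def, single_mul_single, add_comm]

end Laurent

theorem stmt_12_general {K : Type*} [Field K] [CharZero K] (n : ℕ)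
    (br : LaurentAlg K n → LaurentAlg K n → LaurentAlg K n)
    (h_anti : ∀ x y, br x y = - br y x)
    (h_add : ∀ x y z, br (x + y) z = br x z + br y z)
    (h_smul : ∀ (a : K) (x y : LaurentAlg K n), br (a • x) y = a • br x y)
    (h_leibniz : ∀ x y z, br (x * y) z = x * br y z + y * br x z)
    (c : Fin n → Fin n → ℤ) (hc : ∀ j k : Fin n, k ≤ j → c j k ≠ 0)
    (hZZ : ∀ j k : Fin n, br (Zgen j) (Zgen k) = 0)
    (hZX : ∀ j k : Fin n, br (Zgen j) (Xgen k) =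
      if k ≤ j then -(c j k : LaurentAlg K n) * (Zgen j * Xgen k) else 0) :
    ∀ I : Ideal (LaurentAlg K n), (∀ a ∈ I, ∀ x, br a x ∈ I) → I = ⊥ ∨ I = ⊤ := by
  intro I hI
  have hbr : IsSkewBiderivation K br := ⟨h_anti, h_add, h_smul, h_leibniz⟩
  refine or_iff_not_imp_left.mpr fun hne => ?_
  obtain ⟨f, hfI, hf0, hmin⟩ := exists_minimal_support_zero_mem hne
  have weight_eq_zero {g} {e : (Fin n → ℤ) × (Fin n → ℤ) →+ K}
      (hT : ∀ p ∈ f.coeff.support, hbr.logHamiltonian g (single p 1) = e p • single p 1)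
      {p} (hp : p ∈ f.coeff.support) : e p = 0 :=
    (eq_of_mem_support_of_minimal (I.restrictScalars K) (fun _ => hbr.logHamiltonian_mem hI g)
      hfI hmin hT hp hf0).trans e.map_zero
  have hfst : ∀ p ∈ f.coeff.support, p.1 = 0 := fun p hp =>
    Matrix.eq_zero_of_mulVec_eq_zero (det_lowerTriangularPart_ne_zero hc) <| funext fun j => by
      simpa [zWeight] using
        weight_eq_zero (fun q _ => logHamiltonian_Zgen_single hbr hZZ hZX j q) hp
  have hsnd : ∀ p ∈ f.coeff.support, p.2 = 0 := fun p hp =>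
    Matrix.eq_zero_of_vecMul_eq_zero (det_lowerTriangularPart_ne_zero hc) <| funext fun j => by
      simpa [xWeight] using
        weight_eq_zero (fun q hq => logHamiltonian_Xgen_single hbr hZX j (hfst q hq)) hp
  have hf : f = single 0 (f.coeff 0) := coeff_injective <| Finsupp.support_subset_singleton.mp
    fun p hp => Finset.mem_singleton.mpr (Prod.ext (hfst p hp) (hsnd p hp))
  refine I.eq_top_of_isUnit_mem hfI ?_
  rw [hf]
  exact isUnit_single_zero (isUnit_iff_ne_zero.mpr (Finsupp.mem_support_iff.mp hf0))

/-- Let `K` be a field of characteristic `0` and consider the Laurent polynomial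
Poisson algebra `A° = K[X₁^{±1},…,X_n^{±1},Z₁^{±1},…,Z_n^{±1}]` with Poisson bracket
satisfying `{Z_j, Z_k} = 0`, `{Z_j, X_k} = -δ_{k≤j} c_{jk} Z_j X_k` with `c_{jk}`
nonzero integers for `k ≤ j`, and `{X_j, X_k}` in the polynomial subalgebra
`K[X₁,…,X_n]`. Then `A°` has no nonzero proper Poisson ideals. -/
theorem stmt_12 {K : Type*} [Field K] [CharZero K] (n : ℕ)
    (br : LaurentAlg K n → LaurentAlg K n → LaurentAlg K n)
    (h_anti : ∀ x y, br x y = - br y x)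
    (h_add : ∀ x y z, br (x + y) z = br x z + br y z)
    (h_smul : ∀ (a : K) (x y : LaurentAlg K n), br (a • x) y = a • br x y)
    (h_leibniz : ∀ x y z, br (x * y) z = x * br y z + y * br x z)
    (h_jacobi : ∀ x y z, br x (br y z) + br y (br z x) + br z (br x y) = 0)
    (c : Fin n → Fin n → ℤ) (hc : ∀ j k : Fin n, k ≤ j → c j k ≠ 0)
    (hZZ : ∀ j k : Fin n, br (Zgen j) (Zgen k) = 0)
    (hZX : ∀ j k : Fin n, br (Zgen j) (Xgen k) =
      if k ≤ j then -(c j k : LaurentAlg K n) * (Zgen j * Xgen k) else 0)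
    (hXX : ∀ j k : Fin n, br (Xgen j) (Xgen k) ∈
      Algebra.adjoin K (Set.range (Xgen (K := K) (n := n)))) :
    ∀ I : Ideal (LaurentAlg K n), (∀ a ∈ I, ∀ x, br a x ∈ I) → I = ⊥ ∨ I = ⊤ :=
  stmt_12_general n br h_anti h_add h_smul h_leibniz c hc hZZ hZX
end

section
/- Let T be an integral domain, ε₁, …, ε_n ∈ T^× primitive d₁, …, d_n-th roots of unity respectively with ε_j ≠ 1, and suppose d_j | d_l for j ≤ l, and all β_{jk} = 1. Then the center of the associated graded skew polynomial algebra with relations x̄_j x̄_k = ε_j x̄_k x̄_j (j<k), x̄_j ȳ_k = ȳ_k x̄_j (j<k), x̄_j ȳ_k = ε_k ȳ_k x̄_j (j>k), ȳ_j ȳ_k = ȳ_k ȳ_j, x̄_j ȳ_j = ε_j ȳ_j x̄_j, equals the polynomial subalgebra T[x̄_1^{d_1}, ȳ_1^{d_1}, …, x̄_n^{d_n}, ȳ_n^{d_n}]. -/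
open FreeAlgebra

/-- The defining relations of the associated graded skew polynomial algebra
(quantum affine space) of the quantized Weyl algebra with all `β_{jk} = 1`:
generators `x̄_j = inl j`, `ȳ_j = inr j` with
`x̄_j x̄_k = ε_j x̄_k x̄_j` (j<k), `x̄_j ȳ_k = ȳ_k x̄_j` (j<k),
`x̄_j ȳ_k = ε_k ȳ_k x̄_j` (j>k), `ȳ_j ȳ_k = ȳ_k ȳ_j`, `x̄_j ȳ_j = ε_j ȳ_j x̄_j`. -/
inductive GrRel (T : Type*) [CommRing T] {n : ℕ} (ε : Fin n → T) :
    FreeAlgebra T (Fin n ⊕ Fin n) → FreeAlgebra T (Fin n ⊕ Fin n) → Prop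
  | xx {j k : Fin n} (h : j < k) :
      GrRel T ε (ι T (Sum.inl j) * ι T (Sum.inl k))
        (ε j • (ι T (Sum.inl k) * ι T (Sum.inl j)))
  | xy_lt {j k : Fin n} (h : j < k) :
      GrRel T ε (ι T (Sum.inl j) * ι T (Sum.inr k))
        (ι T (Sum.inr k) * ι T (Sum.inl j))
  | xy_gt {j k : Fin n} (h : k < j) :
      GrRel T ε (ι T (Sum.inl j) * ι T (Sum.inr k))
        (ε k • (ι T (Sum.inr k) * ι T (Sum.inl j)))
  | yy {j k : Fin n} :
      GrRel T ε (ι T (Sum.inr j) * ι T (Sum.inr k))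
        (ι T (Sum.inr k) * ι T (Sum.inr j))
  | xy_eq {j : Fin n} :
      GrRel T ε (ι T (Sum.inl j) * ι T (Sum.inr j))
        (ε j • (ι T (Sum.inr j) * ι T (Sum.inl j)))

/-!
With the generators ordered `x̄_1 < ⋯ < x̄_n < ȳ_1 < ⋯ < ȳ_n`, every pair `g_i < g_j` satisfies
`g_i g_j = μ_ij g_j g_i`, so the algebra is a quantum affine space: the monomials
`N_q = ∏ g_i ^ q_i`, taken in decreasing order, span it. Letting `g_i` act on the free module
with basis `e_p` indexed by exponent vectors by `e_p ↦ (∏_{j > i} μ_ij ^ p_j) e_{p + e_i}` gives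
a representation in which `N_q e_0 = e_q`, so the `N_q` form a basis. Comparing the coefficients
of `g_i z` and `z g_i` in this basis, a central `z` only involves monomials whose exponent
satisfies `∏_{j > i} μ_ij ^ q_j = ∏_{j < i} μ_ji ^ q_j` for every `i`. For the `x̄`-exponents `a`
and the `ȳ`-exponents `b` these equations read `ε_k ^ (∑_{l ≥ k} a_l) = 1` and then
`∏_{l ≤ k} ε_l ^ b_l = 1`; since `d_j ∣ d_l` for `j ≤ l`, they force `d_k ∣ a_k` and
`d_k ∣ b_k` by induction on `k`. Conversely `x̄_k ^ d_k` and `ȳ_k ^ d_k` commute with every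
generator.
-/

open Finset

section SkewCommute

variable {T R : Type*} [CommSemiring T] [Semiring R] [Algebra T R] {a b : R} {t : T}

theorem pow_mul_eq_smul_mul_pow (h : a * b = t • (b * a)) :
    ∀ m : ℕ, a ^ m * b = t ^ m • (b * a ^ m)
  | 0 => by simp
  | m + 1 => by
    rw [pow_succ, mul_assoc, h, mul_smul_comm, ← mul_assoc, pow_mul_eq_smul_mul_pow h m,
      smul_mul_assoc, smul_smul, mul_assoc, ← pow_succ, ← pow_succ']

theorem mul_pow_eq_smul_pow_mul (h : a * b = t • (b * a)) :
    ∀ m : ℕ, a * b ^ m = t ^ m • (b ^ m * a)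
  | 0 => by simp
  | m + 1 => by
    rw [pow_succ', ← mul_assoc, h, smul_mul_assoc, mul_assoc, mul_pow_eq_smul_pow_mul h m,
      mul_smul_comm, smul_smul, ← mul_assoc, ← pow_succ']

end SkewCommute

theorem Finsupp.apply_add_eq_mul_of_single {M T : Type*} [AddCommMonoid M] [IsRightCancelAdd M]
    [CommSemiring T] {F : (M →₀ T) →ₗ[T] (M →₀ T)} {w : M → T} {δ : M}
    (hF : ∀ p t, F (Finsupp.single p t) = Finsupp.single (p + δ) (w p * t)) (v : M →₀ T)
    (p : M) : F v (p + δ) = w p * v p := by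
  induction v using Finsupp.induction_linear with
  | zero => simp
  | add u v hu hv => simp [hu, hv, mul_add]
  | single p' t =>
    classical
    rw [hF, Finsupp.single_apply, Finsupp.single_apply]
    simp only [add_left_inj, mul_ite, mul_zero]
    split_ifs with h <;> simp [h]

@[to_additive]
theorem Finset.prod_map_sort {α M : Type*} [CommMonoid M] [DecidableEq α] (s : Finset α)
    (r : α → α → Prop) [DecidableRel r] [IsTrans α r] [Std.Antisymm r] [Std.Total r]
    (f : α → M) : ((s.sort r).map f).prod = ∏ i ∈ s, f i := by
  rw [← List.prod_toFinset f (sort_nodup s r), sort_toFinset]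

theorem Fintype.prod_sumLex {α β M : Type*} [Fintype α] [Fintype β] [CommMonoid M]
    (f : α ⊕ₗ β → M) : ∏ i, f i = (∏ a, f (toLex (.inl a))) * ∏ b, f (toLex (.inr b)) :=
  Fintype.prod_sum_type f

theorem dvd_of_forall_dvd_sum_Ici {σ : Type*} [LinearOrder σ] [LocallyFiniteOrderTop σ]
    [WellFoundedGT σ] {d a : σ → ℕ} (hd : ∀ j k, j ≤ k → d j ∣ d k)
    (h : ∀ k, d k ∣ ∑ l ≥ k, a l) (k : σ) : d k ∣ a k := by
  induction k using WellFoundedGT.induction with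
  | _ k ih =>
    have hIoi : d k ∣ ∑ l > k, a l :=
      dvd_sum fun l hl => (hd k l (mem_Ioi.1 hl).le).trans (ih l (mem_Ioi.1 hl))
    have hk := h k
    rw [← sum_Ioi_add_eq_sum_Ici] at hk
    exact (Nat.dvd_add_right hIoi).1 hk

theorem dvd_of_forall_prod_Iic_pow_eq_one {σ M : Type*} [LinearOrder σ] [LocallyFiniteOrderBot σ]
    [WellFoundedLT σ] [CommMonoid M] {ε : σ → M} {d b : σ → ℕ}
    (hprim : ∀ k, IsPrimitiveRoot (ε k) (d k)) (h : ∀ k, ∏ l ≤ k, ε l ^ b l = 1) (k : σ) :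
    d k ∣ b k := by
  induction k using WellFoundedLT.induction with
  | _ k ih =>
    have hIio : ∏ l < k, ε l ^ b l = 1 :=
      prod_eq_one fun l hl => ((hprim l).pow_eq_one_iff_dvd _).2 (ih l (mem_Iio.1 hl))
    have hk := h k
    rw [← prod_Iio_mul_eq_prod_Iic, hIio, one_mul] at hk
    exact (hprim k).dvd_of_pow_eq_one _ hk

namespace QuantumAffineSpace

section Relations

variable {σ T A : Type*} [LinearOrder σ] [CommSemiring T] [Semiring A] [Algebra T A]
  {μ : σ → σ → T} {g : σ → A}

theorem exists_mul_prod_map_pow_eq_smul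
    (hrel : ∀ i j, i < j → g i * g j = μ i j • (g j * g i))
    {l : List σ} (hl : l.Pairwise (· > ·)) {i : σ} (hi : i ∈ l) (q : σ → ℕ) :
    ∃ t : T, g i * (l.map fun j => g j ^ q j).prod =
      t • (l.map fun j => g j ^ (q + Pi.single i 1 : σ → ℕ) j).prod := by
  induction l with
  | nil => simp at hi
  | cons j l ih =>
    rw [List.pairwise_cons] at hl
    rcases eq_or_ne j i with rfl | hji
    · have hj : j ∉ l := fun h => lt_irrefl j (hl.1 j h)
      have hrest :
          l.map (fun k => g k ^ (q + Pi.single j 1 : σ → ℕ) k) = l.map fun k => g k ^ q k :=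
        List.map_congr_left fun k hk => by simp [ne_of_mem_of_not_mem hk hj]
      refine ⟨1, ?_⟩
      rw [List.map_cons, List.map_cons, List.prod_cons, List.prod_cons, hrest, one_smul,
        Pi.add_apply, Pi.single_eq_same, pow_succ', mul_assoc]
    · have hil : i ∈ l := (List.mem_cons.mp hi).resolve_left hji.symm
      obtain ⟨t, ht⟩ := ih hl.2 hil
      refine ⟨μ i j ^ q j * t, ?_⟩
      simp only [List.map_cons, List.prod_cons, ← mul_assoc,
        mul_pow_eq_smul_pow_mul (hrel i j (hl.1 i hil)), smul_mul_assoc]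
      rw [mul_assoc, ht, mul_smul_comm, smul_smul, Pi.add_apply, Pi.single_eq_of_ne hji, add_zero]

theorem pow_mem_center (hgen : Algebra.adjoin T (Set.range g) = ⊤)
    (hrel : ∀ i j, i < j → g i * g j = μ i j • (g j * g i)) {i : σ} {m : ℕ}
    (hlt : ∀ j, j < i → μ j i ^ m = 1) (hgt : ∀ j, i < j → μ i j ^ m = 1) :
    g i ^ m ∈ Subalgebra.center T A := by
  have hcomm : ∀ x ∈ Set.range g, Commute (g i ^ m) x := by
    rintro _ ⟨j, rfl⟩
    rcases lt_trichotomy j i with h | rfl | h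
    · have := mul_pow_eq_smul_pow_mul (hrel j i h) m
      rw [hlt j h, one_smul] at this
      exact this.symm
    · exact (Commute.refl _).pow_left m
    · have := pow_mul_eq_smul_mul_pow (hrel i j h) m
      rwa [hgt j h, one_smul] at this
  refine Subalgebra.mem_center_iff.2 fun a => ?_
  have ha : a ∈ Algebra.adjoin T (Set.range g) := hgen ▸ Algebra.mem_top
  exact (Algebra.commute_of_mem_adjoin_of_forall_mem_commute ha hcomm).eq.symm

end Relations

variable {σ T : Type*} [LinearOrder σ] [Fintype σ] [CommSemiring T] (μ : σ → σ → T)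

/-- For a family `g` with `g i * g j = μ i j • (g j * g i)` whenever `i < j`, `weight μ i p` and
`coweight μ i p` are the scalars by which `g i * N p` and `N p * g i` differ from
`N (p + Pi.single i 1)`, where `N = orderedMonomial g`. -/
def weight (i : σ) (p : σ → ℕ) : T := ∏ j with i < j, μ i j ^ p j

def coweight (i : σ) (p : σ → ℕ) : T := ∏ j with j < i, μ j i ^ p j

def orderedMonomial {A : Type*} [Semiring A] (g : σ → A) (q : σ → ℕ) : A :=
  ((univ.sort (· ≥ ·)).map fun i => g i ^ q i).prod

variable {μ}

theorem weight_add (i : σ) (p q : σ → ℕ) : weight μ i (p + q) = weight μ i p * weight μ i q := by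
  simp only [weight, Pi.add_apply, pow_add, prod_mul_distrib]

theorem weight_zero (i : σ) : weight μ i 0 = 1 := by simp [weight]

theorem weight_list_sum (i : σ) (l : List (σ → ℕ)) :
    weight μ i l.sum = (l.map (weight μ i)).prod := by
  induction l with
  | nil => simp [weight_zero]
  | cons p l ih => simp [weight_add, ih]

section Monomial

variable {A : Type*} [Semiring A] [Algebra T A] {g : σ → A}

theorem orderedMonomial_zero : orderedMonomial g 0 = 1 := by simp [orderedMonomial]

theorem orderedMonomial_mem_adjoin {D q : σ → ℕ} (h : ∀ i, D i ∣ q i) :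
    orderedMonomial g q ∈ Algebra.adjoin T (Set.range fun i => g i ^ D i) := by
  refine list_prod_mem fun x hx => ?_
  obtain ⟨i, -, rfl⟩ := List.mem_map.1 hx
  obtain ⟨k, hk⟩ := h i
  rw [hk, pow_mul]
  exact pow_mem (Algebra.subset_adjoin (Set.mem_range_self i)) k

theorem exists_mul_orderedMonomial (hrel : ∀ i j, i < j → g i * g j = μ i j • (g j * g i))
    (i : σ) (q : σ → ℕ) :
    ∃ t : T, g i * orderedMonomial g q = t • orderedMonomial g (q + Pi.single i 1) :=
  exists_mul_prod_map_pow_eq_smul hrel (sortedGT_sort univ).pairwise ((mem_sort _).2 (mem_univ i)) q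

theorem mem_span_orderedMonomial (hgen : Algebra.adjoin T (Set.range g) = ⊤)
    (hrel : ∀ i j, i < j → g i * g j = μ i j • (g j * g i)) (a : A) :
    a ∈ Submodule.span T (Set.range (orderedMonomial g)) := by
  set W := Submodule.span T (Set.range (orderedMonomial g))
  have hgW : ∀ i, ∀ w ∈ W, g i * w ∈ W := by
    intro i w hw
    induction hw using Submodule.span_induction with
    | mem _ hw =>
      obtain ⟨q, rfl⟩ := hw
      obtain ⟨t, ht⟩ := exists_mul_orderedMonomial hrel i q
      exact ht ▸ W.smul_mem t (Submodule.subset_span ⟨_, rfl⟩)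
    | zero => simp
    | add u v _ _ hu hv => rw [mul_add]; exact W.add_mem hu hv
    | smul t u _ hu => rw [mul_smul_comm]; exact W.smul_mem t hu
  have haW : ∀ w ∈ W, a * w ∈ W := by
    have ha : a ∈ Algebra.adjoin T (Set.range g) := hgen ▸ Algebra.mem_top
    induction ha using Algebra.adjoin_induction with
    | mem x hx => obtain ⟨i, rfl⟩ := hx; exact hgW i
    | algebraMap t => intro w hw; rw [← Algebra.smul_def]; exact W.smul_mem t hw
    | add x y _ _ hx hy => intro w hw; rw [add_mul]; exact W.add_mem (hx w hw) (hy w hw)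
    | mul x y _ _ hx hy => intro w hw; rw [mul_assoc]; exact hx _ (hy w hw)
  simpa using haW 1 (orderedMonomial_zero (g := g) ▸ Submodule.subset_span ⟨0, rfl⟩)

end Monomial

theorem weight_single (i j : σ) (m : ℕ) :
    weight μ i (Pi.single j m) = if i < j then μ i j ^ m else 1 := by
  simp [weight, Pi.single_apply, pow_ite, prod_ite_eq']

theorem prod_weight_single_pow (i : σ) (q : σ → ℕ) :
    ∏ j, weight μ j (Pi.single i 1) ^ q j = coweight μ i q := by
  simp [weight_single, coweight, ite_pow, prod_ite]

variable (μ) in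
noncomputable def skewShift (i : σ) : Module.End T ((σ → ℕ) →₀ T) :=
  Finsupp.lsum T fun p => weight μ i p • Finsupp.lsingle (p + Pi.single i 1)

theorem skewShift_single (i : σ) (p : σ → ℕ) (t : T) :
    skewShift μ i (Finsupp.single p t) = Finsupp.single (p + Pi.single i 1) (weight μ i p * t) := by
  simp [skewShift]

theorem skewShift_single_zero (i : σ) (t : T) :
    skewShift μ i (Finsupp.single 0 t) = Finsupp.single (Pi.single i 1) t := by
  rw [skewShift_single, weight_zero, one_mul, zero_add]

theorem skewShift_apply_add (i : σ) (v : (σ → ℕ) →₀ T) (p : σ → ℕ) :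
    skewShift μ i v (p + Pi.single i 1) = weight μ i p * v p :=
  Finsupp.apply_add_eq_mul_of_single (skewShift_single i) v p

theorem skewShift_pow_single (i : σ) (p : σ → ℕ) (t : T) :
    ∀ m : ℕ, (skewShift μ i ^ m) (Finsupp.single p t) =
      Finsupp.single (p + Pi.single i m) (weight μ i p ^ m * t)
  | 0 => by simp
  | m + 1 => by
    rw [pow_succ', Module.End.mul_apply, skewShift_pow_single i p t m, skewShift_single,
      weight_add, weight_single, if_neg (lt_irrefl i), mul_one, add_assoc, ← Pi.single_add,
      pow_succ', mul_assoc]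

theorem skewShift_mul_skewShift {i j : σ} (h : i < j) :
    skewShift μ i * skewShift μ j = μ i j • (skewShift μ j * skewShift μ i) := by
  refine Finsupp.lhom_ext fun p t => ?_
  simp only [Module.End.mul_apply, LinearMap.smul_apply, skewShift_single, Finsupp.smul_single,
    weight_add, weight_single, if_pos h, if_neg (asymm h), smul_eq_mul]
  rw [add_right_comm]
  congr 1
  ring

section Representation

variable {A : Type*} [Semiring A] [Algebra T A] {g : σ → A}
  {ρ : A →ₐ[T] Module.End T ((σ → ℕ) →₀ T)}

theorem apply_prod_map_pow_single (hρ : ∀ i, ρ (g i) = skewShift μ i) {l : List σ}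
    (hl : l.Pairwise (· > ·)) (q p : σ → ℕ) (t : T) :
    ρ (l.map fun j => g j ^ q j).prod (Finsupp.single p t) =
      Finsupp.single (p + (l.map fun j => Pi.single j (q j)).sum)
        ((l.map fun j => weight μ j p ^ q j).prod * t) := by
  induction l with
  | nil => simp
  | cons i l ih =>
    rw [List.pairwise_cons] at hl
    have hw : weight μ i (l.map fun j => Pi.single j (q j)).sum = 1 := by
      rw [weight_list_sum, List.map_map]
      refine List.prod_eq_one fun w hw => ?_
      obtain ⟨j, hj, rfl⟩ := List.mem_map.1 hw
      simp [weight_single, not_lt.2 (hl.1 j hj).le]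
    rw [List.map_cons, List.prod_cons, map_mul, map_pow, hρ, Module.End.mul_apply, ih hl.2,
      skewShift_pow_single, weight_add, hw, mul_one]
    simp only [List.map_cons, List.sum_cons, List.prod_cons]
    congr 1
    · abel
    · ring

theorem apply_orderedMonomial_single (hρ : ∀ i, ρ (g i) = skewShift μ i) (q p : σ → ℕ) (t : T) :
    ρ (orderedMonomial g q) (Finsupp.single p t) =
      Finsupp.single (p + q) ((∏ j, weight μ j p ^ q j) * t) := by
  rw [orderedMonomial, apply_prod_map_pow_single hρ (sortedGT_sort univ).pairwise,
    Finset.prod_map_sort, Finset.sum_map_sort, Finset.univ_sum_single]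

theorem apply_linearCombination_single_apply_add (hρ : ∀ i, ρ (g i) = skewShift μ i)
    (f : (σ → ℕ) →₀ T) (p q : σ → ℕ) :
    ρ (Finsupp.linearCombination T (orderedMonomial g) f) (Finsupp.single p 1) (q + p) =
      (∏ j, weight μ j p ^ q j) * f q := by
  let F : ((σ → ℕ) →₀ T) →ₗ[T] ((σ → ℕ) →₀ T) :=
    LinearMap.applyₗ (Finsupp.single p 1) ∘ₗ ρ.toLinearMap ∘ₗ
      Finsupp.linearCombination T (orderedMonomial g)
  refine Finsupp.apply_add_eq_mul_of_single (F := F) (w := fun q => ∏ j, weight μ j p ^ q j)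
    (fun q t => ?_) f q
  simp [F, apply_orderedMonomial_single hρ, add_comm p, mul_comm]

theorem weight_eq_coweight_of_mem_center [IsRightCancelMulZero T]
    (hρ : ∀ i, ρ (g i) = skewShift μ i) {f : (σ → ℕ) →₀ T}
    (hf : Finsupp.linearCombination T (orderedMonomial g) f ∈ Subalgebra.center T A)
    {q : σ → ℕ} (hq : q ∈ f.support) (i : σ) : weight μ i q = coweight μ i q := by
  set z := Finsupp.linearCombination T (orderedMonomial g) f
  have hcomm : ρ (g i * z) = ρ (z * g i) := congrArg ρ (Subalgebra.mem_center_iff.1 hf (g i))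
  have h := congr($hcomm (Finsupp.single 0 1) (q + Pi.single i 1))
  have h0 : ρ z (Finsupp.single 0 1) q = f q := by
    simpa [weight_zero] using apply_linearCombination_single_apply_add hρ f 0 q
  rw [map_mul, map_mul, Module.End.mul_apply, Module.End.mul_apply, hρ, skewShift_apply_add, h0,
    skewShift_single_zero, apply_linearCombination_single_apply_add hρ,
    prod_weight_single_pow] at h
  exact mul_right_cancel₀ (Finsupp.mem_support_iff.1 hq) h

theorem mem_span_orderedMonomial_of_mem_center [IsRightCancelMulZero T]
    (hgen : Algebra.adjoin T (Set.range g) = ⊤)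
    (hrel : ∀ i j, i < j → g i * g j = μ i j • (g j * g i))
    (hρ : ∀ i, ρ (g i) = skewShift μ i) {z : A} (hz : z ∈ Subalgebra.center T A) :
    z ∈ Submodule.span T (orderedMonomial g '' {q | ∀ i, weight μ i q = coweight μ i q}) := by
  obtain ⟨f, rfl⟩ : ∃ f, Finsupp.linearCombination T (orderedMonomial g) f = z := by
    rw [← LinearMap.mem_range, Finsupp.range_linearCombination]
    exact mem_span_orderedMonomial hgen hrel z
  exact (Finsupp.mem_span_image_iff_linearCombination T).2
    ⟨f, fun q hq => weight_eq_coweight_of_mem_center hρ hz hq, rfl⟩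

theorem center_eq_adjoin_pow [IsRightCancelMulZero T]
    (hgen : Algebra.adjoin T (Set.range g) = ⊤)
    (hrel : ∀ i j, i < j → g i * g j = μ i j • (g j * g i))
    (hρ : ∀ i, ρ (g i) = skewShift μ i) (D : σ → ℕ)
    (hdvd : ∀ q : σ → ℕ, (∀ i, weight μ i q = coweight μ i q) → ∀ i, D i ∣ q i)
    (hpow : ∀ i j, i < j → μ i j ^ D i = 1 ∧ μ i j ^ D j = 1) :
    Subalgebra.center T A = Algebra.adjoin T (Set.range fun i => g i ^ D i) := by
  refine le_antisymm (fun z hz => ?_) (Algebra.adjoin_le ?_)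
  · refine (Subalgebra.mem_toSubmodule _).1 <|
      (Submodule.span_le (p := Subalgebra.toSubmodule _)).2 ?_
      (mem_span_orderedMonomial_of_mem_center hgen hrel hρ hz)
    rintro _ ⟨q, hq, rfl⟩
    exact orderedMonomial_mem_adjoin (hdvd q hq)
  · rintro _ ⟨i, rfl⟩
    exact pow_mem_center hgen hrel (fun j h => (hpow j i h).2) (fun j h => (hpow i j h).1)

end Representation

end QuantumAffineSpace

namespace GrRel

open QuantumAffineSpace Sum

variable {T : Type*} [CommRing T] {n : ℕ} (ε : Fin n → T)

/-- The commutation scalars of `GrRel` for the order of `Fin n ⊕ₗ Fin n`, which puts every `x̄_j`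
before every `ȳ_k`: `g_i g_j = coeff ε i j • g_j g_i` for `i < j`. The values for `i ≥ j` are
never used. -/
def coeff (i j : Fin n ⊕ₗ Fin n) : T :=
  match ofLex i, ofLex j with
  | inl a, inl _ => ε a
  | inl a, inr b => if b ≤ a then ε b else 1
  | inr _, _ => 1

theorem of_lt {i j : Fin n ⊕ Fin n} (h : toLex i < toLex j) :
    GrRel T ε (ι T i * ι T j) (coeff ε (toLex i) (toLex j) • (ι T j * ι T i)) := by
  rcases i with a | a <;> rcases j with b | b
  · simpa [coeff] using xx (T := T) (ε := ε) (Lex.inl_lt_inl_iff.1 h)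
  · rcases lt_trichotomy b a with hba | rfl | hab
    · simpa [coeff, hba.le] using xy_gt (T := T) (ε := ε) hba
    · simpa [coeff] using xy_eq (T := T) (ε := ε) (j := b)
    · simpa [coeff, not_le.2 hab] using xy_lt (T := T) (ε := ε) hab
  · exact absurd h Lex.not_inr_lt_inl
  · simpa [coeff] using yy (T := T) (ε := ε) (j := a) (k := b)

theorem lift_eq_lift {B : Type*} [Semiring B] [Algebra T B] {f : Fin n ⊕ Fin n → B}
    (hf : ∀ i j, toLex i < toLex j → f i * f j = coeff ε (toLex i) (toLex j) • (f j * f i))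
    ⦃x y : FreeAlgebra T (Fin n ⊕ Fin n)⦄ (h : GrRel T ε x y) : lift T f x = lift T f y := by
  cases h with
  | @xx j k h => simpa [coeff] using hf (inl j) (inl k) (Lex.inl_lt_inl_iff.2 h)
  | @xy_lt j k h => simpa [coeff, not_le.2 h] using hf (inl j) (inr k) (Lex.inl_lt_inr _ _)
  | @xy_gt j k h => simpa [coeff, h.le] using hf (inl j) (inr k) (Lex.inl_lt_inr _ _)
  | @yy j k =>
    simp only [map_mul, lift_ι_apply]
    rcases lt_trichotomy j k with h | rfl | h
    · simpa [coeff] using hf (inr j) (inr k) (Lex.inr_lt_inr_iff.2 h)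
    · rfl
    · simpa [coeff] using (hf (inr k) (inr j) (Lex.inr_lt_inr_iff.2 h)).symm
  | @xy_eq j => simpa [coeff] using hf (inl j) (inr j) (Lex.inl_lt_inr _ _)

def gen (i : Fin n ⊕ₗ Fin n) : RingQuot (GrRel T ε) :=
  RingQuot.mkAlgHom T (GrRel T ε) (ι T (ofLex i))

theorem gen_mul_gen {i j : Fin n ⊕ₗ Fin n} (h : i < j) :
    gen ε i * gen ε j = coeff ε i j • (gen ε j * gen ε i) := by
  simpa [gen] using RingQuot.mkAlgHom_rel T (of_lt ε (i := ofLex i) (j := ofLex j) h)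

theorem adjoin_range_gen : Algebra.adjoin T (Set.range (gen ε)) = ⊤ := by
  rw [show gen ε = RingQuot.mkAlgHom T (GrRel T ε) ∘ ι T ∘ ofLex from rfl, Set.range_comp,
    ofLex.surjective.range_comp, ← AlgHom.map_adjoin, adjoin_range_ι, Algebra.map_top,
    AlgHom.range_eq_top]
  exact RingQuot.mkAlgHom_surjective T _

theorem exists_algHom_gen_eq_skewShift :
    ∃ ρ : RingQuot (GrRel T ε) →ₐ[T] Module.End T ((Fin n ⊕ₗ Fin n → ℕ) →₀ T),
      ∀ i, ρ (gen ε i) = skewShift (coeff ε) i :=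
  ⟨RingQuot.liftAlgHom T ⟨lift T fun s => skewShift (coeff ε) (toLex s),
    lift_eq_lift ε fun _ _ h => skewShift_mul_skewShift h⟩, fun i => by simp [gen]⟩

theorem weight_inl (k : Fin n) (q : Fin n ⊕ₗ Fin n → ℕ) :
    weight (coeff ε) (toLex (inl k)) q =
      (∏ l > k, ε k ^ q (toLex (inl l))) * ∏ l ≤ k, ε l ^ q (toLex (inr l)) := by
  rw [weight, prod_filter, Fintype.prod_sumLex]
  simp [coeff, ite_pow, ← prod_filter, filter_lt_eq_Ioi, filter_ge_eq_Iic]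

theorem coweight_inl (k : Fin n) (q : Fin n ⊕ₗ Fin n → ℕ) :
    coweight (coeff ε) (toLex (inl k)) q = ∏ l < k, ε l ^ q (toLex (inl l)) := by
  rw [coweight, prod_filter, Fintype.prod_sumLex]
  simp [coeff, ← prod_filter, filter_gt_eq_Iio]

theorem weight_inr (k : Fin n) (q : Fin n ⊕ₗ Fin n → ℕ) :
    weight (coeff ε) (toLex (inr k)) q = 1 :=
  prod_eq_one fun _ _ => one_pow _

theorem coweight_inr (k : Fin n) (q : Fin n ⊕ₗ Fin n → ℕ) :
    coweight (coeff ε) (toLex (inr k)) q = ε k ^ ∑ l ≥ k, q (toLex (inl l)) := by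
  rw [coweight, prod_filter, Fintype.prod_sumLex, ← prod_pow_eq_pow_sum]
  simp [coeff, ite_pow, ← prod_filter, filter_le_eq_Ici]

variable {ε} {d : Fin n → ℕ}

theorem dvd_of_weight_eq_coweight (hprim : ∀ j, IsPrimitiveRoot (ε j) (d j))
    (hdiv : ∀ j l : Fin n, j ≤ l → d j ∣ d l) {q : Fin n ⊕ₗ Fin n → ℕ}
    (hq : ∀ i, weight (coeff ε) i q = coweight (coeff ε) i q) (i : Fin n ⊕ Fin n) :
    Sum.elim d d i ∣ q (toLex i) := by
  have hx : ∀ k, d k ∣ q (toLex (inl k)) := dvd_of_forall_dvd_sum_Ici hdiv fun k => by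
    have hk := hq (toLex (inr k))
    rw [weight_inr, coweight_inr] at hk
    exact (hprim k).dvd_of_pow_eq_one _ hk.symm
  have hy : ∀ k, d k ∣ q (toLex (inr k)) := dvd_of_forall_prod_Iic_pow_eq_one hprim fun k => by
    have h1 : ∏ l > k, ε k ^ q (toLex (inl l)) = 1 := prod_eq_one fun l hl =>
      ((hprim k).pow_eq_one_iff_dvd _).2 ((hdiv k l (mem_Ioi.1 hl).le).trans (hx l))
    have h2 : ∏ l < k, ε l ^ q (toLex (inl l)) = 1 :=
      prod_eq_one fun l _ => ((hprim l).pow_eq_one_iff_dvd _).2 (hx l)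
    have hk := hq (toLex (inl k))
    rwa [weight_inl, coweight_inl, h1, h2, one_mul] at hk
  rcases i with k | k
  exacts [hx k, hy k]

theorem coeff_pow_eq_one (hprim : ∀ j, IsPrimitiveRoot (ε j) (d j))
    (hdiv : ∀ j l : Fin n, j ≤ l → d j ∣ d l) {i j : Fin n ⊕ Fin n} (h : toLex i < toLex j) :
    coeff ε (toLex i) (toLex j) ^ Sum.elim d d i = 1 ∧
      coeff ε (toLex i) (toLex j) ^ Sum.elim d d j = 1 := by
  have hε : ∀ {k m}, d k ∣ m → ε k ^ m = 1 := fun h => ((hprim _).pow_eq_one_iff_dvd _).2 h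
  rcases i with a | a <;> rcases j with b | b
  · exact ⟨hε dvd_rfl, hε (hdiv a b (Lex.inl_lt_inl_iff.1 h).le)⟩
  · by_cases hba : b ≤ a
    · simpa [coeff, hba] using ⟨hε (hdiv b a hba), hε dvd_rfl⟩
    · simp [coeff, hba]
  · exact absurd h Lex.not_inr_lt_inl
  · simp [coeff]

theorem range_gen_pow :
    (Set.range fun i => gen ε i ^ Sum.elim d d (ofLex i)) =
      (Set.range fun j => RingQuot.mkAlgHom T (GrRel T ε) (ι T (inl j)) ^ d j) ∪
        Set.range fun j => RingQuot.mkAlgHom T (GrRel T ε) (ι T (inr j)) ^ d j := by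
  ext z
  simp only [Set.mem_union, Set.mem_range]
  constructor
  · rintro ⟨i | i, rfl⟩
    exacts [Or.inl ⟨i, rfl⟩, Or.inr ⟨i, rfl⟩]
  · rintro (⟨j, rfl⟩ | ⟨j, rfl⟩)
    exacts [⟨toLex (inl j), rfl⟩, ⟨toLex (inr j), rfl⟩]

end GrRel

theorem stmt_18_general {T : Type*} [CommRing T] [IsDomain T] {n : ℕ}
    (ε : Fin n → T) (d : Fin n → ℕ)
    (hprim : ∀ j, IsPrimitiveRoot (ε j) (d j))
    (hdiv : ∀ j l : Fin n, j ≤ l → d j ∣ d l) :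
    Subalgebra.center T (RingQuot (GrRel T ε)) =
      Algebra.adjoin T
        ((Set.range fun j : Fin n =>
            RingQuot.mkAlgHom T (GrRel T ε) (ι T (Sum.inl j)) ^ d j) ∪
         (Set.range fun j : Fin n =>
            RingQuot.mkAlgHom T (GrRel T ε) (ι T (Sum.inr j)) ^ d j)) := by
  obtain ⟨ρ, hρ⟩ := GrRel.exists_algHom_gen_eq_skewShift ε
  rw [← GrRel.range_gen_pow]
  exact QuantumAffineSpace.center_eq_adjoin_pow (GrRel.adjoin_range_gen ε)
    (fun _ _ => GrRel.gen_mul_gen ε) hρ _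
    (fun _ hq i => GrRel.dvd_of_weight_eq_coweight hprim hdiv hq (ofLex i))
    (fun i j h => GrRel.coeff_pow_eq_one hprim hdiv (i := ofLex i) (j := ofLex j) h)

/-- Let `T` be an integral domain, `ε_j ∈ T^×` a primitive `d_j`-th root of unity with
`ε_j ≠ 1`, and `d_j ∣ d_l` for `j ≤ l`. Then the center of the quantum affine space
with relations as in `GrRel` (all `β_{jk} = 1`) is the polynomial subalgebra
`T[x̄_1^{d_1}, ȳ_1^{d_1}, …, x̄_n^{d_n}, ȳ_n^{d_n}]`. -/
theorem stmt_18 {T : Type*} [CommRing T] [IsDomain T] {n : ℕ}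
    (ε : Fin n → T) (d : Fin n → ℕ)
    (hprim : ∀ j, IsPrimitiveRoot (ε j) (d j))
    (hne1 : ∀ j, ε j ≠ 1)
    (hdiv : ∀ j l : Fin n, j ≤ l → d j ∣ d l) :
    Subalgebra.center T (RingQuot (GrRel T ε)) =
      Algebra.adjoin T
        ((Set.range fun j : Fin n =>
            RingQuot.mkAlgHom T (GrRel T ε) (ι T (Sum.inl j)) ^ d j) ∪
         (Set.range fun j : Fin n =>
            RingQuot.mkAlgHom T (GrRel T ε) (ι T (Sum.inr j)) ^ d j)) :=
  stmt_18_general ε d hprim hdiv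
end
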